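/- The 6-dimensional real Lie algebra s_{6,147}^0 with structure equations (e^{26} - e^{35}, -e^{16} + e^{36} - e^{45}, e^{46}, -e^{36}, 0, 0) admits an integrable complex structure J with identically vanishing Koszul 1-form: the endomorphism defined by J e1 = e2, J e2 = -e1, J e3 = -e4, J e4 = e3, J e5 = -2 e6, J e6 = (1/2) e5 satisfies J^2 = -Id, N_J ≡ 0, and ψ(x) = Tr(J ∘ ad x) - Tr(ad(Jx)) = 0 for all x in g. -/
import Mathlib


namespace Stmt3

abbrev V : Type := Fin 6 → ℝ

/-- standard basis -/
noncomputable def e (i : Fin 6) : V := Pi.single i 1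

/-- the Lie bracket -/
def br (x y : V) : V := fun k =>
  match k with
  | 0 => -(x 1 * y 5 - x 5 * y 1) + (x 2 * y 4 - x 4 * y 2)
  | 1 => (x 0 * y 5 - x 5 * y 0) - (x 2 * y 5 - x 5 * y 2) + (x 3 * y 4 - x 4 * y 3)
  | 2 => -(x 3 * y 5 - x 5 * y 3)
  | 3 => x 2 * y 5 - x 5 * y 2
  | 4 => 0
  | 5 => 0

/-- the adjoint operator `ad x = [x, ·]` as a linear endomorphism -/
noncomputable def ad (x : V) : V →ₗ[ℝ] V where
  toFun := br x
  map_add' := by intro a b; funext k; fin_cases k <;> simp [br] <;> ring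
  map_smul' := by intro c a; funext k; fin_cases k <;> simp [br] <;> ring

/-- the Nijenhuis tensor of an endomorphism `J` -/
noncomputable def nijenhuis (J : V →ₗ[ℝ] V) (x y : V) : V :=
  br x y + J (br (J x) y + br x (J y)) - br (J x) (J y)

/-- the Koszul 1-form `ψ(x) = Tr(J ∘ ad x) - Tr(ad (J x))` -/
noncomputable def psi (J : V →ₗ[ℝ] V) (x : V) : ℝ :=
  LinearMap.trace ℝ V (J ∘ₗ ad x) - LinearMap.trace ℝ V (ad (J x))

noncomputable def Jmap : V →ₗ[ℝ] V where
  toFun x := fun k =>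
    match k with
    | 0 => -x 1
    | 1 => x 0
    | 2 => x 3
    | 3 => -x 2
    | 4 => (1/2) * x 5
    | 5 => -2 * x 4
  map_add' := by intro a b; funext k; fin_cases k <;> simp <;> ring
  map_smul' := by intro c a; funext k; fin_cases k <;> simp <;> ring

lemma trace_eq (f : V →ₗ[ℝ] V) :
    LinearMap.trace ℝ V f = ∑ i : Fin 6, f (Pi.single i 1) i := by
  rw [LinearMap.trace_eq_matrix_trace ℝ (Pi.basisFun ℝ (Fin 6))]
  simp [Matrix.trace, LinearMap.toMatrix_apply, Pi.basisFun_apply]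

/-- `s_{6,147}^0` admits an integrable complex structure with identically
vanishing Koszul 1-form, namely `J e1 = e2, J e3 = -e4, J e5 = -2 e6`. -/
theorem stmt_3 :
    ∃ J : V →ₗ[ℝ] V,
      J (e 0) = e 1 ∧ J (e 1) = -e 0 ∧ J (e 2) = -e 3 ∧ J (e 3) = e 2 ∧
      J (e 4) = (-2 : ℝ) • e 5 ∧ J (e 5) = (1 / 2 : ℝ) • e 4 ∧
      (∀ x : V, J (J x) = -x) ∧
      (∀ x y : V, nijenhuis J x y = 0) ∧
      (∀ x : V, psi J x = 0) := by
  refine ⟨Jmap, ?_, ?_, ?_, ?_, ?_, ?_, ?_, ?_, ?_⟩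
  · funext k; fin_cases k <;> simp [Jmap, e, Pi.single_apply]
  · funext k; fin_cases k <;> simp [Jmap, e, Pi.single_apply]
  · funext k; fin_cases k <;> simp [Jmap, e, Pi.single_apply]
  · funext k; fin_cases k <;> simp [Jmap, e, Pi.single_apply]
  · funext k; fin_cases k <;> simp [Jmap, e, Pi.single_apply]
  · funext k; fin_cases k <;> simp [Jmap, e, Pi.single_apply]
  · intro x; funext k; fin_cases k <;> simp [Jmap] <;> ring
  · intro x y; funext k; fin_cases k <;>
      simp [nijenhuis, Jmap, br, ad] <;> ring
  · intro x
    simp only [psi, trace_eq]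
    simp [Jmap, ad, br, LinearMap.comp_apply, Pi.single_apply, Fin.sum_univ_six]
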